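/- arXiv:math-ph/0504073 — 2 statements merged into one kernel-verified Lean document; each statement's English description precedes it below -/
import Mathlib

section
/- If a smooth Hamiltonian vector field H_p on R^{2n} satisfies a Lipschitz bound ||H_p(z1) - H_p(z2)|| ≤ a ||z1 - z2|| for all z1, z2 in a compact invariant set K, then every nonconstant periodic orbit of the flow contained in K has period at least 2π/a. -/
/-!
Along an orbit `x` of `ẋ = F x`, the velocity `u = F ∘ x` has mean zero over a period, since
`∫₀ᵀ u = x T - x 0 = 0`. Wirtinger's inequality (Parseval, with `c_n(u') = (2π i n / T) c_n(u)`)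
gives `∫₀ᵀ ‖u‖² ≤ (T / 2π)² ∫₀ᵀ ‖u'‖²`, and the Lipschitz bound on the orbit gives
`‖u'‖ ≤ a ‖u‖`. Hence `1 ≤ (T a / 2π)²` as soon as `∫₀ᵀ ‖u‖² > 0`, which holds because, by
uniqueness of solutions, the orbit is `T`-periodic and nonconstant.
-/

open Real MeasureTheory Set

theorem ContinuousOn.memLp_restrict_Ioc {E : Type*} [NormedAddCommGroup E] {a b : ℝ} {f : ℝ → E}
    (hf : ContinuousOn f (Icc a b)) (p : ENNReal) : MemLp f p (volume.restrict (Ioc a b)) := by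
  obtain ⟨C, hC⟩ := isCompact_Icc.exists_bound_of_continuousOn hf
  have hbound : ∀ᵐ x ∂volume.restrict (Ioc a b), ‖f x‖ ≤ C :=
    (ae_restrict_iff' measurableSet_Ioc).2 (.of_forall fun x hx => hC x (Ioc_subset_Icc_self hx))
  exact (memLp_top_of_bound ((hf.mono Ioc_subset_Icc_self).aestronglyMeasurable
    measurableSet_Ioc) C hbound).mono_exponent le_top

open Complex in
theorem norm_fourierCoeffOn_le_of_hasDerivAt {a b : ℝ} (hab : a < b) {f f' : ℝ → ℂ}
    (hf : ∀ x ∈ Icc a b, HasDerivAt f (f' x) x) (hf' : IntervalIntegrable f' volume a b)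
    (hper : f a = f b) {n : ℤ} (hn : n ≠ 0) :
    ‖fourierCoeffOn hab f n‖ ≤ (b - a) / (2 * π) * ‖fourierCoeffOn hab f' n‖ := by
  have hn' : 1 ≤ |(n : ℝ)| := by exact_mod_cast Int.one_le_abs hn
  rw [fourierCoeffOn_of_hasDerivAt hab hn (by rwa [uIcc_of_le hab.le]) hf', hper, sub_self,
    mul_zero, zero_sub, ← ofReal_sub]
  simp only [norm_mul, norm_div, norm_neg, norm_one, norm_real, norm_I, norm_intCast,
    Complex.norm_ofNat, Real.norm_eq_abs, abs_of_pos pi_pos, abs_of_pos (sub_pos.2 hab)]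
  rw [div_mul_eq_mul_div, one_mul, div_le_iff₀ (by positivity)]
  calc (b - a) * ‖fourierCoeffOn hab f' n‖
      = (b - a) / (2 * π) * ‖fourierCoeffOn hab f' n‖ * (2 * π * 1 * 1) := by field_simp
    _ ≤ _ := by gcongr

theorem Complex.wirtinger_inequality {a b : ℝ} (hab : a < b) {f f' : ℝ → ℂ}
    (hf : ∀ x ∈ Icc a b, HasDerivAt f (f' x) x) (hf' : ContinuousOn f' (Icc a b))
    (hper : f a = f b) (hmean : ∫ x in a..b, f x = 0) :
    ∫ x in a..b, ‖f x‖ ^ 2 ≤ ((b - a) / (2 * π)) ^ 2 * ∫ x in a..b, ‖f' x‖ ^ 2 := by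
  have hfc : ContinuousOn f (Icc a b) := fun x hx => (hf x hx).continuousAt.continuousWithinAt
  have parseval_f := hasSum_sq_fourierCoeffOn hab (hfc.memLp_restrict_Ioc 2)
  have parseval_f' := hasSum_sq_fourierCoeffOn hab (hf'.memLp_restrict_Ioc 2)
  have hcoeff : ∀ n, ‖fourierCoeffOn hab f n‖ ^ 2 ≤
      ((b - a) / (2 * π)) ^ 2 * ‖fourierCoeffOn hab f' n‖ ^ 2 := by
    intro n
    rcases eq_or_ne n 0 with rfl | hn
    · have hc₀ : fourierCoeffOn hab f 0 = 0 := by simp [fourierCoeffOn_eq_integral, hmean]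
      rw [hc₀, norm_zero, zero_pow two_ne_zero]
      positivity
    · rw [← mul_pow]
      gcongr
      exact norm_fourierCoeffOn_le_of_hasDerivAt hab hf
        (hf'.intervalIntegrable_of_Icc hab.le) hper hn
  have := hasSum_le hcoeff parseval_f (parseval_f'.mul_left _)
  rwa [smul_eq_mul, smul_eq_mul, mul_left_comm, mul_le_mul_iff_right₀ (by simpa using hab)] at this

theorem Real.wirtinger_inequality {a b : ℝ} (hab : a < b) {f f' : ℝ → ℝ}
    (hf : ∀ x ∈ Icc a b, HasDerivAt f (f' x) x) (hf' : ContinuousOn f' (Icc a b))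
    (hper : f a = f b) (hmean : ∫ x in a..b, f x = 0) :
    ∫ x in a..b, f x ^ 2 ≤ ((b - a) / (2 * π)) ^ 2 * ∫ x in a..b, f' x ^ 2 := by
  have := Complex.wirtinger_inequality hab (f := fun x => (f x : ℂ)) (f' := fun x => (f' x : ℂ))
    (fun x hx => (hf x hx).ofReal_comp) (Complex.continuous_ofReal.comp_continuousOn hf')
    (by rw [hper]) (by rw [intervalIntegral.integral_ofReal, hmean, Complex.ofReal_zero])
  simpa only [Complex.norm_real, Real.norm_eq_abs, sq_abs] using this

theorem EuclideanSpace.wirtinger_inequality {ι : Type*} [Fintype ι] {a b : ℝ} (hab : a < b)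
    {f f' : ℝ → EuclideanSpace ℝ ι}
    (hf : ∀ x ∈ Icc a b, HasDerivAt f (f' x) x) (hf' : ContinuousOn f' (Icc a b))
    (hper : f a = f b) (hmean : ∫ x in a..b, f x = 0) :
    ∫ x in a..b, ‖f x‖ ^ 2 ≤ ((b - a) / (2 * π)) ^ 2 * ∫ x in a..b, ‖f' x‖ ^ 2 := by
  have hfc : ContinuousOn f (Icc a b) := fun x hx => (hf x hx).continuousAt.continuousWithinAt
  have hcoord : ∀ {g : ℝ → EuclideanSpace ℝ ι}, ContinuousOn g (Icc a b) →
      ∫ x in a..b, ‖g x‖ ^ 2 = ∑ i, ∫ x in a..b, g x i ^ 2 := fun {g} hg => by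
    simp_rw [EuclideanSpace.real_norm_sq_eq]
    refine intervalIntegral.integral_finsetSum fun i _ => ?_
    have hgi : ContinuousOn (fun x => g x i) (Icc a b) :=
      (EuclideanSpace.proj i).continuous.comp_continuousOn hg
    exact (hgi.pow 2).intervalIntegrable_of_Icc hab.le
  rw [hcoord hfc, hcoord hf', Finset.mul_sum]
  refine Finset.sum_le_sum fun i _ => Real.wirtinger_inequality hab
    (fun x hx => (EuclideanSpace.proj (𝕜 := ℝ) i).hasFDerivAt.comp_hasDerivAt x (hf x hx))
    ((EuclideanSpace.proj i).continuous.comp_continuousOn hf') (by rw [hper]) ?_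
  simpa [hmean] using (EuclideanSpace.proj (𝕜 := ℝ) i).intervalIntegral_comp_comm
    (hfc.intervalIntegrable_of_Icc (μ := volume) hab.le)

open Filter Topology in
theorem HasDerivAt.norm_le_mul_of_norm_sub_le {E F : Type*} [NormedAddCommGroup E]
    [NormedSpace ℝ E] [NormedAddCommGroup F] [NormedSpace ℝ F] {u : ℝ → E} {x : ℝ → F}
    {u' : E} {x' : F} {t C : ℝ} (hu : HasDerivAt u u' t) (hx : HasDerivAt x x' t)
    (h : ∀ s, ‖u s - u t‖ ≤ C * ‖x s - x t‖) : ‖u'‖ ≤ C * ‖x'‖ := by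
  refine le_of_tendsto_of_tendsto' (hasDerivAt_iff_tendsto_slope.mp hu).norm
    ((hasDerivAt_iff_tendsto_slope.mp hx).norm.const_mul C) fun s => ?_
  simp only [slope_def_module, norm_smul, norm_inv, Real.norm_eq_abs]
  calc |s - t|⁻¹ * ‖u s - u t‖ ≤ |s - t|⁻¹ * (C * ‖x s - x t‖) := by gcongr; exact h s
    _ = C * (|s - t|⁻¹ * ‖x s - x t‖) := by ring

theorem periodic_of_hasDerivAt_of_lipschitzOnWith {E : Type*} [NormedAddCommGroup E]
    [NormedSpace ℝ E] {v : E → E} {K : NNReal} {s : Set E} (hv : LipschitzOnWith K v s)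
    {x : ℝ → E} (hx : ∀ t, HasDerivAt x (v (x t)) t) (hxs : ∀ t, x t ∈ s) {T : ℝ}
    (hT : x T = x 0) : Function.Periodic x T := by
  have hshift : ∀ t, HasDerivAt (fun t => x (t + T)) (v (x (t + T))) t := fun t =>
    (hx (t + T)).comp_add_const t T
  exact congrFun (ODE_solution_unique_univ (v := fun _ => v) (s := fun _ => s) (t₀ := 0)
    (fun _ => hv) (fun t => ⟨hshift t, hxs _⟩) (fun t => ⟨hx t, hxs t⟩) (by simpa using hT))

theorem Function.Periodic.integral_norm_sq_deriv_pos {E : Type*} [NormedAddCommGroup E]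
    [NormedSpace ℝ E] {x u : ℝ → E} {T : ℝ} (hper : Function.Periodic x T) (hT : 0 < T)
    (hx : ∀ t, HasDerivAt x (u t) t) (hu : Continuous u) (hnc : ∃ t, x t ≠ x 0) :
    0 < ∫ t in (0 : ℝ)..T, ‖u t‖ ^ 2 := by
  refine intervalIntegral.integral_pos hT (hu.norm.pow 2).continuousOn
    (fun _ _ => by positivity) ?_
  by_contra! hzero
  have hu0 : ∀ t ∈ Icc 0 T, u t = 0 := fun t ht => by
    simpa using (hzero t ht).antisymm (by positivity)
  have hconst : ∀ t ∈ Icc 0 T, x t = x 0 := constant_of_has_deriv_right_zero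
    (fun t _ => (hx t).continuousAt.continuousWithinAt)
    (fun t ht => hu0 t (Ico_subset_Icc_self ht) ▸ (hx t).hasDerivWithinAt)
  obtain ⟨t, ht⟩ := hnc
  obtain ⟨s, hs, hts⟩ := hper.exists_mem_Ico₀ hT t
  exact ht (hts.trans (hconst s (Ico_subset_Icc_self hs)))

theorem two_pi_le_period_mul_lipschitz {ι : Type*} [Fintype ι]
    {v : EuclideanSpace ℝ ι → EuclideanSpace ℝ ι} (hv : ContDiff ℝ 1 v)
    {s : Set (EuclideanSpace ℝ ι)} {a : ℝ} (hLip : ∀ y ∈ s, ∀ z ∈ s, ‖v y - v z‖ ≤ a * ‖y - z‖)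
    {x : ℝ → EuclideanSpace ℝ ι} (hx : ∀ t, HasDerivAt x (v (x t)) t) (hxs : ∀ t, x t ∈ s)
    {T : ℝ} (hT : 0 < T) (hxT : x T = x 0) (hnc : ∃ t, x t ≠ x 0) :
    2 * π ≤ T * a := by
  set u := fun t => v (x t)
  set u' := fun t => fderiv ℝ v (x t) (u t)
  have hxc : Continuous x := continuous_iff_continuousAt.2 fun t => (hx t).continuousAt
  have huc : Continuous u := hv.continuous.comp hxc
  have hu : ∀ t, HasDerivAt u (u' t) t := fun t =>
    ((hv.differentiable one_ne_zero).differentiableAt.hasFDerivAt).comp_hasDerivAt t (hx t)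
  have hu'c : Continuous u' := ((hv.continuous_fderiv one_ne_zero).comp hxc).clm_apply huc
  have hu'_le : ∀ t, ‖u' t‖ ≤ a * ‖u t‖ := fun t =>
    (hu t).norm_le_mul_of_norm_sub_le (hx t) fun r => hLip _ (hxs r) _ (hxs t)
  have ha : 0 ≤ a := by
    obtain ⟨t, ht⟩ := hnc
    exact nonneg_of_mul_nonneg_left ((norm_nonneg _).trans (hLip _ (hxs t) _ (hxs 0)))
      (norm_pos_iff.2 (sub_ne_zero.2 ht))
  have hperiodic : Function.Periodic x T := periodic_of_hasDerivAt_of_lipschitzOnWith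
    (LipschitzOnWith.of_dist_le' (by simpa only [dist_eq_norm] using hLip)) hx hxs hxT
  have hpos : 0 < ∫ t in (0 : ℝ)..T, ‖u t‖ ^ 2 :=
    hperiodic.integral_norm_sq_deriv_pos hT hx huc hnc
  have hmean : ∫ t in (0 : ℝ)..T, u t = 0 := by
    rw [intervalIntegral.integral_eq_sub_of_hasDerivAt (fun t _ => hx t)
      (huc.intervalIntegrable 0 T), hxT, sub_self]
  have hwirtinger := EuclideanSpace.wirtinger_inequality hT (fun t _ => hu t) hu'c.continuousOn
    (by simp only [u, hxT]) hmean
  have henergy : ∫ t in (0 : ℝ)..T, ‖u' t‖ ^ 2 ≤ a ^ 2 * ∫ t in (0 : ℝ)..T, ‖u t‖ ^ 2 := by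
    rw [← intervalIntegral.integral_const_mul]
    refine intervalIntegral.integral_mono_on hT.le ((hu'c.norm.pow 2).intervalIntegrable 0 T)
      ((continuous_const.mul (huc.norm.pow 2)).intervalIntegrable 0 T) fun t _ => ?_
    rw [← mul_pow]
    exact pow_le_pow_left₀ (norm_nonneg _) (hu'_le t) 2
  have hsq : (2 * π) ^ 2 ≤ (T * a) ^ 2 := by
    rw [← one_le_div (by positivity), ← div_pow]
    refine le_of_mul_le_mul_right ?_ hpos
    calc 1 * ∫ t in (0 : ℝ)..T, ‖u t‖ ^ 2
        ≤ (T / (2 * π)) ^ 2 * ∫ t in (0 : ℝ)..T, ‖u' t‖ ^ 2 := by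
          simpa only [one_mul, sub_zero] using hwirtinger
      _ ≤ (T / (2 * π)) ^ 2 * (a ^ 2 * ∫ t in (0 : ℝ)..T, ‖u t‖ ^ 2) := by gcongr
      _ = (T * a / (2 * π)) ^ 2 * ∫ t in (0 : ℝ)..T, ‖u t‖ ^ 2 := by ring
  exact (pow_le_pow_iff_left₀ (by positivity) (by positivity) two_ne_zero).1 hsq

theorem yorke_minimal_period_general
    (n : ℕ) (F : EuclideanSpace ℝ (Fin (2 * n)) → EuclideanSpace ℝ (Fin (2 * n)))
    (hF : ContDiff ℝ 1 F)
    (Φ : ℝ → EuclideanSpace ℝ (Fin (2 * n)) → EuclideanSpace ℝ (Fin (2 * n)))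
    (hΦ0 : ∀ z, Φ 0 z = z)
    (hflow : ∀ z t, HasDerivAt (fun s => Φ s z) (F (Φ t z)) t)
    (K : Set (EuclideanSpace ℝ (Fin (2 * n))))
    (hinv : ∀ z ∈ K, ∀ t : ℝ, Φ t z ∈ K)
    (a : ℝ)
    (hLip : ∀ z1 ∈ K, ∀ z2 ∈ K, ‖F z1 - F z2‖ ≤ a * ‖z1 - z2‖)
    (z : EuclideanSpace ℝ (Fin (2 * n))) (hz : z ∈ K)
    (T : ℝ) (hT : 0 < T) (hper : Φ T z = z)
    (hnonconst : ∃ t : ℝ, Φ t z ≠ z) :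
    2 * π / a ≤ T := by
  have hbound : 2 * π ≤ T * a := two_pi_le_period_mul_lipschitz hF hLip (hflow z) (hinv z hz) hT
    (by simp only [hper, hΦ0]) (by simpa only [hΦ0] using hnonconst)
  have ha : 0 < a := pos_of_mul_pos_right (two_pi_pos.trans_le hbound) hT.le
  rwa [div_le_iff₀ ha]

/-- Yorke's theorem: a Lipschitz bound `a` on the vector field on a compact
invariant set forces every nonconstant periodic orbit in the set to have
period at least `2π/a`. -/
theorem yorke_minimal_period
    (n : ℕ) (F : EuclideanSpace ℝ (Fin (2 * n)) → EuclideanSpace ℝ (Fin (2 * n)))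
    (hF : ContDiff ℝ 1 F)
    (Φ : ℝ → EuclideanSpace ℝ (Fin (2 * n)) → EuclideanSpace ℝ (Fin (2 * n)))
    (hΦ0 : ∀ z, Φ 0 z = z)
    (hflow : ∀ z t, HasDerivAt (fun s => Φ s z) (F (Φ t z)) t)
    (K : Set (EuclideanSpace ℝ (Fin (2 * n)))) (hK : IsCompact K)
    (hinv : ∀ z ∈ K, ∀ t : ℝ, Φ t z ∈ K)
    (a : ℝ) (ha : 0 < a)
    (hLip : ∀ z1 ∈ K, ∀ z2 ∈ K, ‖F z1 - F z2‖ ≤ a * ‖z1 - z2‖)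
    (z : EuclideanSpace ℝ (Fin (2 * n))) (hz : z ∈ K)
    (T : ℝ) (hT : 0 < T) (hper : Φ T z = z)
    (hnonconst : ∃ t : ℝ, Φ t z ≠ z) :
    2 * π / a ≤ T :=
  yorke_minimal_period_general n F hF Φ hΦ0 hflow K hinv a hLip z hz T hT hper hnonconst
end

section
/- Let V_{2k}, W_{2k} : R^n → R be continuous, positively homogeneous of degree 2k, nonvanishing away from 0. If ∫_{S^{n-1}} |V_{2k}(η)|^{-n/(2k)} dη = ∫_{S^{n-1}} |W_{2k}(η)|^{-n/(2k)} dη, then ∫_{R^n} f(|V_{2k}(x)|) dx = ∫_{R^n} f(|W_{2k}(x)|) dx for every f ∈ L¹(R₊, r^{n/(2k)-1} dr). -/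
/-!
In polar coordinates `x = r • η`, homogeneity gives `|V x| = r ^ (2k) * |V η|`, and the
substitution `s = r ^ (2k) * |V η|` in the radial integral shows that `|V|` pushes Lebesgue
measure forward to `(c_V / 2k) * s ^ (n / 2k - 1) ds` on `(0, ∞)`, where `c_V` is the spherical
integral of `|V| ^ (-n / 2k)`. Equal spherical integrals thus mean that `|V|` and `|W|` have the
same distribution, hence the same pullback integrals.
-/

open MeasureTheory Set
open scoped ENNReal

theorem lintegral_volumeIoiPow (m : ℕ) {g : ℝ → ℝ≥0∞} (hg : Measurable g) :
    ∫⁻ r, g r ∂Measure.volumeIoiPow m = ∫⁻ r in Ioi 0, ENNReal.ofReal (r ^ m) * g r := by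
  rw [Measure.volumeIoiPow, lintegral_withDensity_eq_lintegral_mul _ (by fun_prop)
    (g := fun r : Ioi (0 : ℝ) => g r) (hg.comp measurable_subtype_coe)]
  exact lintegral_subtype_comap measurableSet_Ioi (fun r => ENNReal.ofReal (r ^ m) * g r)

open Real in
theorem lintegral_Ioi_comp_rpow_mul {p q c : ℝ} (hp : 0 < p) (hc : 0 < c) (g : ℝ → ℝ≥0∞) :
    ∫⁻ r in Ioi 0, ENNReal.ofReal (r ^ (q - 1)) * g (r ^ p * c)
      = ENNReal.ofReal (c ^ (-q / p) / p) *
          ∫⁻ s in Ioi 0, ENNReal.ofReal (s ^ (q / p - 1)) * g s := by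
  have hderiv : ∀ r ∈ Ioi (0 : ℝ),
      HasDerivWithinAt (fun r => r ^ p * c) (p * r ^ (p - 1) * c) (Ioi 0) r := fun r hr =>
    ((hasDerivAt_rpow_const (Or.inl (ne_of_gt hr))).mul_const c).hasDerivWithinAt
  have hinj : InjOn (fun r : ℝ => r ^ p * c) (Ioi 0) := fun r hr s hs h =>
    rpow_left_injOn hp.ne' (show 0 ≤ r from le_of_lt hr) (show 0 ≤ s from le_of_lt hs)
      (mul_right_cancel₀ hc.ne' h)
  have himage : (fun r : ℝ => r ^ p * c) '' Ioi 0 = Ioi 0 := by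
    refine Subset.antisymm
      (image_subset_iff.2 fun r (hr : (0 : ℝ) < r) => (by positivity : (0 : ℝ) < r ^ p * c))
      fun s (hs : 0 < s) => ⟨(s / c) ^ p⁻¹, (by positivity : (0 : ℝ) < (s / c) ^ p⁻¹), ?_⟩
    dsimp only
    rw [rpow_inv_rpow (div_pos hs hc).le hp.ne', div_mul_cancel₀ _ hc.ne']
  calc ∫⁻ r in Ioi 0, ENNReal.ofReal (r ^ (q - 1)) * g (r ^ p * c)
      = ∫⁻ r in Ioi 0, ENNReal.ofReal (c ^ (-q / p) / p) * (ENNReal.ofReal |p * r ^ (p - 1) * c|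
          * (ENNReal.ofReal ((r ^ p * c) ^ (q / p - 1)) * g (r ^ p * c))) := by
        refine setLIntegral_congr_fun measurableSet_Ioi fun r (hr : 0 < r) => ?_
        rw [← mul_assoc, ← mul_assoc, ← ENNReal.ofReal_mul (by positivity),
          ← ENNReal.ofReal_mul (by positivity)]
        congr 2
        have hexp : r ^ (p - 1) * r ^ (p * (q / p - 1)) = r ^ (q - 1) := by
          rw [← rpow_add hr]
          congr 1
          field_simp
          ring
        rw [abs_of_pos (by positivity), mul_rpow (by positivity) hc.le, ← rpow_mul hr.le,
          rpow_sub_one hc.ne', neg_div, rpow_neg hc.le, ← hexp]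
        field_simp
    _ = _ := by
        rw [lintegral_const_mul' _ _ ENNReal.ofReal_ne_top]
        conv_rhs =>
          rw [← himage,
            lintegral_image_eq_lintegral_abs_deriv_mul measurableSet_Ioi hderiv hinj]

theorem lintegral_volumeIoiPow_comp_rpow_mul {n : ℕ} (hn : 0 < n) {p c : ℝ} (hp : 0 < p)
    (hc : 0 < c) {g : ℝ → ℝ≥0∞} (hg : Measurable g) :
    ∫⁻ r, g (r ^ p * c) ∂Measure.volumeIoiPow (n - 1)
      = ENNReal.ofReal (c ^ (-n / p : ℝ) / p) *
          ∫⁻ s in Ioi 0, ENNReal.ofReal (s ^ (n / p - 1 : ℝ)) * g s := by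
  rw [lintegral_volumeIoiPow _ (g := fun r => g (r ^ p * c)) (by fun_prop),
    ← lintegral_Ioi_comp_rpow_mul hp hc]
  refine setLIntegral_congr_fun measurableSet_Ioi fun r _ => ?_
  rw [← Real.rpow_natCast, Nat.cast_pred hn]

theorem abs_apply_smul_of_homogeneous {E : Type*} [AddCommGroup E] [Module ℝ E] {V : E → ℝ}
    {d : ℕ} (hV : ∀ r : ℝ, 0 < r → ∀ x, V (r • x) = r ^ d * V x) (r : ℝ) (hr : 0 < r) (x : E) :
    |V (r • x)| = r ^ (d : ℝ) * |V x| := by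
  rw [hV r hr, abs_mul, abs_of_pos (by positivity), Real.rpow_natCast]

section Polar

variable {E : Type*} [NormedAddCommGroup E] [NormedSpace ℝ E] [FiniteDimensional ℝ E]
  [MeasurableSpace E] [BorelSpace E] (μ : Measure E) [μ.IsAddHaarMeasure]

theorem lintegral_eq_lintegral_toSphere_volumeIoiPow [Nontrivial E] {G : E → ℝ≥0∞}
    (hG : Measurable G) :
    ∫⁻ x, G x ∂μ = ∫⁻ η, ∫⁻ r, G ((r : ℝ) • (η : E))
      ∂Measure.volumeIoiPow (Module.finrank ℝ E - 1) ∂μ.toSphere := by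
  have hpolar := (μ.measurePreserving_homeomorphUnitSphereProd).symm
    (homeomorphUnitSphereProd E).toMeasurableEquiv
  calc ∫⁻ x, G x ∂μ = ∫⁻ x : ({0}ᶜ : Set E), G x ∂(μ.comap (↑)) := by
        rw [lintegral_subtype_comap (measurableSet_singleton _).compl, restrict_compl_singleton]
    _ = ∫⁻ p, G ((homeomorphUnitSphereProd E).symm p) ∂(μ.toSphere.prod _) :=
        (hpolar.lintegral_comp_emb (MeasurableEquiv.measurableEmbedding _) _).symm
    _ = _ := by
        rw [lintegral_prod _ (by fun_prop)]
        simp only [homeomorphUnitSphereProd_symm_apply_coe]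

theorem map_eq_smul_withDensity_of_homogeneous [Nontrivial E] {V : E → ℝ} {p : ℝ}
    (hp : 0 < p) (hVc : Continuous V) (hVhom : ∀ r : ℝ, 0 < r → ∀ x, V (r • x) = r ^ p * V x)
    (hVpos : ∀ x, x ≠ 0 → 0 < V x) :
    μ.map V = ENNReal.ofReal ((∫ η, V η ^ (-(Module.finrank ℝ E : ℝ) / p) ∂μ.toSphere) / p) •
      (volume.restrict (Ioi 0)).withDensity
        fun s => ENNReal.ofReal (s ^ ((Module.finrank ℝ E : ℝ) / p - 1)) := by
  set n := Module.finrank ℝ E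
  have hsphere : ∀ η : Metric.sphere (0 : E) 1, 0 < V η :=
    fun η => hVpos η (Metric.ne_of_mem_sphere η.2 one_ne_zero)
  have hint :
      Integrable (fun η : Metric.sphere (0 : E) 1 => V η ^ (-(n : ℝ) / p) / p) μ.toSphere :=
    (((hVc.comp continuous_subtype_val).rpow_const fun η => .inl (hsphere η).ne').div_const p
      ).integrable_of_hasCompactSupport (.of_compactSpace _)
  refine Measure.ext_of_lintegral _ fun g hg => ?_
  calc ∫⁻ s, g s ∂μ.map V
      = ∫⁻ η, ∫⁻ r, g ((r : ℝ) ^ p * V η) ∂Measure.volumeIoiPow (n - 1) ∂μ.toSphere := by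
        rw [lintegral_map hg hVc.measurable,
          lintegral_eq_lintegral_toSphere_volumeIoiPow μ (G := fun x => g (V x)) (by fun_prop)]
        exact lintegral_congr fun η => lintegral_congr fun r => by rw [hVhom _ r.2]
    _ = (∫⁻ η, ENNReal.ofReal (V η ^ (-(n : ℝ) / p) / p) ∂μ.toSphere)
          * ∫⁻ s in Ioi 0, ENNReal.ofReal (s ^ ((n : ℝ) / p - 1)) * g s := by
        rw [← lintegral_mul_const _ (by fun_prop)]
        exact lintegral_congr fun η =>
          lintegral_volumeIoiPow_comp_rpow_mul Module.finrank_pos hp (hsphere η) hg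
    _ = _ := by
        rw [← ofReal_integral_eq_lintegral_ofReal hint
            (.of_forall fun η => div_nonneg (Real.rpow_nonneg (hsphere η).le _) hp.le),
          integral_div, lintegral_smul_measure,
          lintegral_withDensity_eq_lintegral_mul _ (by fun_prop) hg]
        rfl

theorem map_abs_eq_smul_withDensity_of_homogeneous [Nontrivial E] {V : E → ℝ} {d : ℕ}
    (hd : 0 < d) (hVc : Continuous V) (hVhom : ∀ r : ℝ, 0 < r → ∀ x, V (r • x) = r ^ d * V x)
    (hVne : ∀ x, x ≠ 0 → V x ≠ 0) :
    μ.map (fun x => |V x|)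
      = ENNReal.ofReal ((∫ η, |V η| ^ (-(Module.finrank ℝ E : ℝ) / d) ∂μ.toSphere) / d) •
        (volume.restrict (Ioi 0)).withDensity
          fun s => ENNReal.ofReal (s ^ ((Module.finrank ℝ E : ℝ) / d - 1)) :=
  map_eq_smul_withDensity_of_homogeneous μ (Nat.cast_pos.2 hd) hVc.abs
    (abs_apply_smul_of_homogeneous hVhom) fun x hx => abs_pos.2 (hVne x hx)

end Polar

theorem aestronglyMeasurable_of_mul_rpow {μ : Measure ℝ} {f : ℝ → ℝ} {a : ℝ}
    (hf : AEStronglyMeasurable (fun s => f s * s ^ a) (μ.restrict (Ioi 0))) :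
    AEStronglyMeasurable f (μ.restrict (Ioi 0)) := by
  refine (hf.mul (measurable_id.pow_const (-a)).aestronglyMeasurable).congr ?_
  filter_upwards [ae_restrict_mem measurableSet_Ioi] with s (hs : 0 < s)
  show f s * s ^ a * s ^ (-a) = f s
  rw [mul_assoc, ← Real.rpow_add hs, add_neg_cancel, Real.rpow_zero, mul_one]

/-- If two continuous, positively `2k`-homogeneous, nonvanishing-away-from-`0`
functions have the same spherical average of `|·|^{-n/(2k)}`, then all pullback
integrals `∫_{ℝⁿ} f(|·|) dx` agree. -/
theorem spherical_average_determines_pullbacks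
    (n : ℕ) (hn : 0 < n) (k : ℕ) (hk : 0 < k)
    (V2k W2k : EuclideanSpace ℝ (Fin n) → ℝ)
    (hVc : Continuous V2k) (hWc : Continuous W2k)
    (hVhom : ∀ (lam : ℝ), 0 < lam → ∀ x, V2k (lam • x) = lam ^ (2 * k) * V2k x)
    (hWhom : ∀ (lam : ℝ), 0 < lam → ∀ x, W2k (lam • x) = lam ^ (2 * k) * W2k x)
    (hVne : ∀ x, x ≠ 0 → V2k x ≠ 0) (hWne : ∀ x, x ≠ 0 → W2k x ≠ 0)
    (heq : (∫ η : Metric.sphere (0 : EuclideanSpace ℝ (Fin n)) 1,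
        |V2k (η : EuclideanSpace ℝ (Fin n))| ^ (-(n : ℝ) / (2 * k))
        ∂((volume : Measure (EuclideanSpace ℝ (Fin n))).toSphere))
      = ∫ η : Metric.sphere (0 : EuclideanSpace ℝ (Fin n)) 1,
        |W2k (η : EuclideanSpace ℝ (Fin n))| ^ (-(n : ℝ) / (2 * k))
        ∂((volume : Measure (EuclideanSpace ℝ (Fin n))).toSphere)) :
    ∀ f : ℝ → ℝ,
      IntegrableOn (fun r => f r * r ^ ((n : ℝ) / (2 * k) - 1)) (Set.Ioi 0) →
      ∫ x : EuclideanSpace ℝ (Fin n), f |V2k x|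
        = ∫ x : EuclideanSpace ℝ (Fin n), f |W2k x| := by
  intro f hf
  have : Nonempty (Fin n) := ⟨⟨0, hn⟩⟩
  have hV := map_abs_eq_smul_withDensity_of_homogeneous volume (by positivity : 0 < 2 * k)
    hVc hVhom hVne
  have hW := map_abs_eq_smul_withDensity_of_homogeneous volume (by positivity : 0 < 2 * k)
    hWc hWhom hWne
  push_cast [finrank_euclideanSpace_fin] at hV hW
  have hmap : volume.map (fun x => |V2k x|) = volume.map (fun x => |W2k x|) := by
    rw [hV, hW, heq]
  have hfm : AEStronglyMeasurable f (volume.map fun x => |V2k x|) := by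
    rw [hV]
    exact (aestronglyMeasurable_of_mul_rpow hf.aestronglyMeasurable).mono_ac
      ((withDensity_absolutelyContinuous _ _).smul_left _)
  rw [← integral_map hVc.abs.aemeasurable hfm, hmap,
    integral_map hWc.abs.aemeasurable (hmap ▸ hfm)]
end
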